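/- Let E be a Hilbert C*-module over a unital C*-algebra A, and let T, S be bounded adjointable self-adjoint operators on E. For x ∈ E with ⟨x,x⟩ = 1, setting z := Tx − ⟨Tx,x⟩x and w := Sx − ⟨Sx,x⟩x, one has ⟨z,w⟩ + ⟨w,z⟩ = ⟨{T,S}x,x⟩ − {⟨Tx,x⟩,⟨Sx,x⟩} and ⟨z,w⟩ − ⟨w,z⟩ = −(⟨[T,S]x,x⟩ + [⟨Tx,x⟩,⟨Sx,x⟩]). -/

import Mathlib

open scoped RightActions

/-- The December 2024 Mathlib `CStarModule` (right `Aᵐᵒᵖ`-action, `A`-linear in the second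
argument), restored under a new name since Mathlib's `CStarModule` now uses a left action. -/
class CStarModuleRight (A E : Type*) [NonUnitalSemiring A] [StarRing A] [Module ℂ A]
    [AddCommGroup E] [Module ℂ E] [PartialOrder A] [SMul Aᵐᵒᵖ E] [Norm A] [Norm E]
    extends Inner A E where
  inner_add_right {x} {y} {z} : inner x (y + z) = inner x y + inner x z
  inner_self_nonneg {x} : 0 ≤ inner x x
  inner_self {x} : inner x x = 0 ↔ x = 0
  inner_op_smul_right {a : A} {x y : E} : inner x (y <• a) = inner x y * a
  inner_smul_right_complex {z : ℂ} {x} {y} : inner x (z • y) = z • inner x y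
  star_inner x y : star (inner x y) = inner y x
  norm_eq_sqrt_norm_inner_self x : ‖x‖ = Real.sqrt ‖inner x x‖

variable {A E : Type*} [CStarAlgebra A] [PartialOrder A] [StarOrderedRing A]
  [AddCommGroup E] [Module ℂ E] [SMul Aᵐᵒᵖ E] [Norm E] [CStarModuleRight A E]

local notation "⟪" x ", " y "⟫" => (inner A x y : A)

namespace CStarModuleRight

variable {R M : Type*} [Ring R] [StarRing R] [Module ℂ R] [PartialOrder R] [Norm R]
  [AddCommGroup M] [Module ℂ M] [SMul Rᵐᵒᵖ M] [Norm M] [CStarModuleRight R M]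

theorem inner_sub_right {x y z : M} : inner R x (y - z) = inner R x y - inner R x z :=
  (AddMonoidHom.mk' (fun y : M => inner R x y) fun _ _ => inner_add_right).map_sub y z

theorem inner_add_left {x y z : M} : inner R (x + y) z = inner R x z + inner R y z := by
  rw [← star_inner z, inner_add_right, star_add, star_inner, star_inner]

theorem inner_sub_left {x y z : M} : inner R (x - y) z = inner R x z - inner R y z := by
  rw [← star_inner z, inner_sub_right, star_sub, star_inner, star_inner]

theorem inner_op_smul_left {a : R} {x y : M} : inner R (x <• a) y = star a * inner R x y := by
  rw [← star_inner y, inner_op_smul_right, star_mul, star_inner]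

theorem inner_centered_of_symm {P Q : M → M} (hP : ∀ y z : M, inner R (P y) z = inner R y (P z))
    (hQ : ∀ y z : M, inner R (Q y) z = inner R y (Q z)) {x : M} (hx : inner R x x = 1) :
    inner R (P x - x <• inner R (P x) x) (Q x - x <• inner R (Q x) x) =
      inner R (Q (P x)) x - inner R (P x) x * inner R (Q x) x := by
  have hPQ : inner R (P x) (Q x) = inner R (Q (P x)) x := by rw [← hQ]
  have hPstar : star (inner R (P x) x) = inner R (P x) x := by rw [star_inner, hP]
  rw [inner_sub_left, inner_sub_right, inner_sub_right, inner_op_smul_left, inner_op_smul_left,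
    inner_op_smul_right, inner_op_smul_right, hx, one_mul, hPstar, hPQ, ← hQ]
  abel

end CStarModuleRight

theorem centered_inner_sum_and_diff_general
(T S : E →ₗ[ℂ] E)
    (hT : ∀ y z : E, ⟪T y, z⟫ = ⟪y, T z⟫) (hS : ∀ y z : E, ⟪S y, z⟫ = ⟪y, S z⟫)
    (x : E) (hx : ⟪x, x⟫ = 1) :
    ⟪T x - x <• ⟪T x, x⟫, S x - x <• ⟪S x, x⟫⟫ + ⟪S x - x <• ⟪S x, x⟫, T x - x <• ⟪T x, x⟫⟫ =
      ⟪T (S x) + S (T x), x⟫ - (⟪T x, x⟫ * ⟪S x, x⟫ + ⟪S x, x⟫ * ⟪T x, x⟫) ∧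
    ⟪T x - x <• ⟪T x, x⟫, S x - x <• ⟪S x, x⟫⟫ - ⟪S x - x <• ⟪S x, x⟫, T x - x <• ⟪T x, x⟫⟫ =
      -(⟪T (S x) - S (T x), x⟫ + (⟪T x, x⟫ * ⟪S x, x⟫ - ⟪S x, x⟫ * ⟪T x, x⟫)) := by
  rw [CStarModuleRight.inner_centered_of_symm hT hS hx,
    CStarModuleRight.inner_centered_of_symm hS hT hx, CStarModuleRight.inner_add_left,
    CStarModuleRight.inner_sub_left]
  constructor <;> abel

/-- The sum and difference identities for the centered vectors. -/
theorem centered_inner_sum_and_diff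
(T S : E →ₗ[ℂ] E)
    (hTA : ∀ (a : A) (y : E), T (y <• a) = T y <• a)
    (hSA : ∀ (a : A) (y : E), S (y <• a) = S y <• a)
    (hT : ∀ y z : E, ⟪T y, z⟫ = ⟪y, T z⟫) (hS : ∀ y z : E, ⟪S y, z⟫ = ⟪y, S z⟫)
    (hTb : ∃ C : ℝ, ∀ y : E, ‖T y‖ ≤ C * ‖y‖) (hSb : ∃ C : ℝ, ∀ y : E, ‖S y‖ ≤ C * ‖y‖)
    (x : E) (hx : ⟪x, x⟫ = 1) :
    ⟪T x - x <• ⟪T x, x⟫, S x - x <• ⟪S x, x⟫⟫ + ⟪S x - x <• ⟪S x, x⟫, T x - x <• ⟪T x, x⟫⟫ =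
      ⟪T (S x) + S (T x), x⟫ - (⟪T x, x⟫ * ⟪S x, x⟫ + ⟪S x, x⟫ * ⟪T x, x⟫) ∧
    ⟪T x - x <• ⟪T x, x⟫, S x - x <• ⟪S x, x⟫⟫ - ⟪S x - x <• ⟪S x, x⟫, T x - x <• ⟪T x, x⟫⟫ =
      -(⟪T (S x) - S (T x), x⟫ + (⟪T x, x⟫ * ⟪S x, x⟫ - ⟪S x, x⟫ * ⟪T x, x⟫)) :=
  centered_inner_sum_and_diff_general T S hT hS x hx
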